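/- Let d > 1 be an odd integer such that 2 is a primitive root modulo d (i.e. the multiplicative order of 2 modulo d equals d − 1, so in particular d is prime), let K ≥ 1 be an integer and N an integer. Then H(d; N, K) = ((d−1)^K − (−1)^K)/d if d does not divide N, and H(d; N, K) = ((d−1)^K + (−1)^K (d−1))/d if d divides N. -/

import Mathlib

/-! Since `2` has order `d - 1`, the map `ν ↦ 2 ^ ν` sends `{1, …, d - 1}` injectively, hence
bijectively, onto the `d - 1` nonzero residues mod `d`, so `H(d; N, K)` counts the `K`-tuples of
nonzero residues summing to `N`. In any finite abelian group of order `q`, the number `f_K(t)` of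
`K`-tuples of nonzero elements with sum `t` satisfies `f_{K+1}(t) + f_K(t) = (q - 1) ^ K`: once the
first `K` entries are fixed, the last one is determined by `t`, and it is nonzero unless the first
`K` entries already sum to `t`. With `f_0(t) = [t = 0]` this solves to
`q f_K(t) = (q - 1) ^ K - (-1) ^ K + q (-1) ^ K [t = 0]`. -/

/-- `ε n` is the multiplicative order of `2` modulo `n`. -/
noncomputable def ε (n : ℕ) : ℕ := orderOf (2 : ZMod n)

/-- `H d N K` is the number of `K`-tuples `(ν₁, …, ν_K)` with `1 ≤ νᵢ ≤ ε d` such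
that `d ∣ N - (2^{ν₁} + ⋯ + 2^{ν_K})`. -/
noncomputable def H (d : ℕ) (N : ℤ) (K : ℕ) : ℕ :=
  Nat.card {ν : Fin K → ℕ //
    (∀ i, 1 ≤ ν i ∧ ν i ≤ ε d) ∧ (d : ℤ) ∣ N - ∑ i, (2 : ℤ) ^ ν i}

open Finset

section NonzeroTuples

variable {G : Type*} [AddCommGroup G] [Fintype G] [DecidableEq G]

def nonzeroTuplesWithSum (K : ℕ) (t : G) : Finset (Fin K → {x : G // x ≠ 0}) :=
  {a | ∑ i, (a i : G) = t}

lemma card_nonzeroTuplesWithSum_zero (t : G) :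
    #(nonzeroTuplesWithSum 0 t) = if t = 0 then 1 else 0 := by
  split_ifs with ht <;> simp [nonzeroTuplesWithSum, eq_comm, ht]

lemma card_nonzeroTuplesWithSum_succ (K : ℕ) (t : G) :
    #(nonzeroTuplesWithSum (K + 1) t) =
      ∑ s : {x : G // x ≠ 0}, #(nonzeroTuplesWithSum K (t - s)) := by
  simp only [nonzeroTuplesWithSum, card_filter]
  rw [← (Fin.consEquiv _).sum_comp, Fintype.sum_prod_type]
  simp [Fin.sum_univ_succ, ← eq_sub_iff_add_eq']

lemma sum_card_nonzeroTuplesWithSum (K : ℕ) :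
    ∑ t : G, #(nonzeroTuplesWithSum K t) = (Fintype.card G - 1) ^ K := by
  simp only [nonzeroTuplesWithSum]
  rw [← card_eq_sum_card_fiberwise fun _ _ => mem_univ _]
  simp [Fintype.card_subtype_compl]

lemma card_nonzeroTuplesWithSum_succ_add (K : ℕ) (t : G) :
    #(nonzeroTuplesWithSum (K + 1) t) + #(nonzeroTuplesWithSum K t) =
      (Fintype.card G - 1) ^ K := by
  rw [card_nonzeroTuplesWithSum_succ, ← sum_card_nonzeroTuplesWithSum,
    ← (Equiv.subLeft t).sum_comp, Fintype.sum_eq_add_sum_subtype_ne _ (0 : G)]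
  simp only [Equiv.subLeft_apply, sub_zero]
  exact add_comm _ _

theorem card_mul_card_nonzeroTuplesWithSum (K : ℕ) (t : G) :
    (Fintype.card G : ℤ) * #(nonzeroTuplesWithSum K t) =
      (Fintype.card G - 1) ^ K - (-1) ^ K +
        if t = 0 then (Fintype.card G : ℤ) * (-1) ^ K else 0 := by
  induction K with
  | zero => rw [card_nonzeroTuplesWithSum_zero]; split_ifs <;> simp
  | succ K ih =>
    have h := card_nonzeroTuplesWithSum_succ_add K t
    zify [Fintype.card_pos (α := G)] at h
    rw [eq_sub_of_add_eq h, mul_sub, ih]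
    split_ifs <;> ring

end NonzeroTuples

theorem pow_injOn_Icc_one_orderOf {M : Type*} [Monoid M] (x : M) :
    (Set.Icc 1 (orderOf x)).InjOn (x ^ ·) := by
  rintro a ⟨ha1, ha⟩ b ⟨hb1, hb⟩ hab
  have hmod : a ≡ b [MOD orderOf x] :=
    pow_injOn_Iio_orderOf (Nat.mod_lt _ (by omega)) (Nat.mod_lt _ (by omega))
      (by simpa only [pow_mod_orderOf] using hab)
  exact hmod.eq_of_abs_lt (by rw [abs_sub_lt_iff]; omega)

theorem bijOn_pow_Icc_one_orderOf {M : Type*} [MonoidWithZero M] [Nontrivial M] [Fintype M]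
    {x : M} (hx : orderOf x = Fintype.card M - 1) :
    (Set.Icc 1 (orderOf x)).BijOn (x ^ ·) {y | y ≠ 0} := by
  classical
  have hpos : orderOf x ≠ 0 := by have := Fintype.one_lt_card (α := M); omega
  have hunit : IsUnit x := .of_pow_eq_one (pow_orderOf_eq_one x) hpos
  have hmaps : (Set.Icc 1 (orderOf x)).MapsTo (x ^ ·) {y | y ≠ 0} :=
    fun k _ => (hunit.pow k).ne_zero
  refine ⟨hmaps, pow_injOn_Icc_one_orderOf x, ?_⟩
  have hsurj := Finset.surjOn_of_injOn_of_card_le (s := Finset.Icc 1 (orderOf x))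
    (t := {y | y ≠ 0}) (x ^ ·) (by simpa using hmaps) (by simpa using pow_injOn_Icc_one_orderOf x)
    (by simp [filter_ne', hx])
  simpa using hsurj

theorem natCard_subtype_pi_of_bijOn {ι α β : Type*} {f : α → β} {s : Set α} {t : Set β}
    (hf : s.BijOn f t) (P : (ι → β) → Prop) :
    Nat.card {ν : ι → α // (∀ i, ν i ∈ s) ∧ P (f ∘ ν)} =
      Nat.card {a : ι → t // P fun i => a i} := by
  set e := hf.equiv f
  have he (x : s) : (e x : β) = f x := rfl
  refine Nat.card_congr
    { toFun ν := ⟨fun i => e ⟨ν.1 i, ν.2.1 i⟩, ν.2.2⟩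
      invFun a := ⟨fun i => e.symm (a.1 i), fun i => (e.symm (a.1 i)).2, ?_⟩
      left_inv ν := by simp
      right_inv a := by simp }
  simpa [Function.comp_def, ← he] using a.2

theorem H_eq_card_nonzeroTuplesWithSum {d : ℕ} [Fact (1 < d)]
    (hroot : orderOf (2 : ZMod d) = d - 1) (N : ℤ) (K : ℕ) :
    H d N K = #(nonzeroTuplesWithSum K (N : ZMod d)) := by
  have hbij := bijOn_pow_Icc_one_orderOf (x := (2 : ZMod d)) (by rw [hroot, ZMod.card])
  have hdvd (ν : Fin K → ℕ) :
      (d : ℤ) ∣ N - ∑ i, (2 : ℤ) ^ ν i ↔ ∑ i, (2 : ZMod d) ^ ν i = N := by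
    rw [← ZMod.intCast_zmod_eq_zero_iff_dvd]
    push_cast
    rw [sub_eq_zero, eq_comm]
  simp only [H, ε, hdvd]
  refine (natCard_subtype_pi_of_bijOn hbij
    (P := fun a : Fin K → ZMod d => ∑ i, a i = (N : ZMod d))).trans ?_
  rw [Nat.card_eq_fintype_card, Fintype.card_subtype]
  rfl

theorem H_of_primitive_root_general (d : ℕ) (hd1 : 1 < d)
    (hroot : orderOf (2 : ZMod d) = d - 1) (K : ℕ) (N : ℤ) :
    (¬ (d : ℤ) ∣ N →
      (H d N K : ℝ) = (((d : ℝ) - 1) ^ K - (-1 : ℝ) ^ K) / d) ∧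
    ((d : ℤ) ∣ N →
      (H d N K : ℝ) = (((d : ℝ) - 1) ^ K + (-1 : ℝ) ^ K * ((d : ℝ) - 1)) / d) := by
  have : Fact (1 < d) := ⟨hd1⟩
  have hcount := card_mul_card_nonzeroTuplesWithSum K (N : ZMod d)
  rw [ZMod.card, ← H_eq_card_nonzeroTuplesWithSum hroot] at hcount
  have hd : (d : ℝ) ≠ 0 := by positivity
  constructor
  · intro hN
    rw [if_neg (mt (ZMod.intCast_zmod_eq_zero_iff_dvd N d).1 hN), add_zero] at hcount
    rw [eq_div_iff hd, mul_comm]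
    exact_mod_cast hcount
  · intro hN
    rw [if_pos ((ZMod.intCast_zmod_eq_zero_iff_dvd N d).2 hN)] at hcount
    rw [eq_div_iff hd, mul_comm]
    have hcountR := congrArg (Int.cast : ℤ → ℝ) hcount
    push_cast at hcountR
    linear_combination hcountR

/-- If `d > 1` is odd and `2` is a primitive root modulo `d` (its multiplicative
order is `d - 1`), then for `K ≥ 1` and any integer `N`:
`H(d;N,K) = ((d-1)^K - (-1)^K)/d` if `d ∤ N`, and
`H(d;N,K) = ((d-1)^K + (-1)^K (d-1))/d` if `d ∣ N`. -/
theorem H_of_primitive_root (d : ℕ) (hd1 : 1 < d) (hodd : Odd d)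
    (hroot : orderOf (2 : ZMod d) = d - 1) (K : ℕ) (hK : 1 ≤ K) (N : ℤ) :
    (¬ (d : ℤ) ∣ N →
      (H d N K : ℝ) = (((d : ℝ) - 1) ^ K - (-1 : ℝ) ^ K) / d) ∧
    ((d : ℤ) ∣ N →
      (H d N K : ℝ) = (((d : ℝ) - 1) ^ K + (-1 : ℝ) ^ K * ((d : ℝ) - 1)) / d) :=
  H_of_primitive_root_general d hd1 hroot K N
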